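/- Let 0 < α < 1 and n ∈ ℕ with n^{1−α} > 2, and let f : ℝ → ℝ be continuous and bounded. Then for every x ∈ ℝ, |A_n(f)(x) − f(x)| ≤ ω(f, 1/n^α) + 2(q + 1/q)‖f‖_∞ / B^{β(n^{1−α} − 1)}, and hence ‖A_n(f) − f‖_∞ is bounded by the same quantity. Consequently, if f is in addition uniformly continuous, then A_n(f) → f uniformly on ℝ as n → ∞. -/

import Mathlib

open MeasureTheory Real Filter

noncomputable def nu (B q β x : ℝ) : ℝ := 1 / (1 + q * B ^ (-(β * x)))

noncomputable def G (B q β x : ℝ) : ℝ := (nu B q β (x + 1) - nu B q β (x - 1)) / 2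

noncomputable def Psi (B q β x : ℝ) : ℝ := (G B q β x + G B (1 / q) β x) / 2

noncomputable def modCont (f : ℝ → ℝ) (θ : ℝ) : ℝ :=
  sSup {d : ℝ | ∃ x y : ℝ, |x - y| ≤ θ ∧ d = |f x - f y|}

noncomputable def supNorm (f : ℝ → ℝ) : ℝ := ⨆ x : ℝ, |f x|

noncomputable def opA (B q β : ℝ) (n : ℕ) (f : ℝ → ℝ) (x : ℝ) : ℝ :=
  ∫ v : ℝ, f (v / n) * Psi B q β (n * x - v)

noncomputable def opAStar (B q β : ℝ) (n : ℕ) (f : ℝ → ℝ) (x : ℝ) : ℝ :=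
  (n : ℝ) * ∫ v : ℝ, (∫ h in (v / n)..((v + 1) / n), f h) * Psi B q β (n * x - v)

noncomputable def opABar (B q β : ℝ) (r : ℕ) (w : ℕ → ℝ) (n : ℕ) (f : ℝ → ℝ) (x : ℝ) : ℝ :=
  ∫ v : ℝ, (∑ s ∈ Finset.Icc 1 r, w s * f (v / n + (s : ℝ) / ((n : ℝ) * (r : ℝ)))) *
    Psi B q β (n * x - v)

section Helpers

open Set Topology

variable {B q β : ℝ}

lemma rpow_pos' (hB : 1 < B) (y : ℝ) : 0 < B ^ y :=
  Real.rpow_pos_of_pos (by linarith) y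

lemma denom_pos (hB : 1 < B) (hq : 0 < q) (x : ℝ) : 0 < 1 + q * B ^ (-(β * x)) := by
  nlinarith [rpow_pos' hB (-(β * x))]

lemma nu_pos (hB : 1 < B) (hq : 0 < q) (x : ℝ) : 0 < nu B q β x :=
  one_div_pos.mpr (denom_pos hB hq x)

lemma nu_le_one (hB : 1 < B) (hq : 0 < q) (x : ℝ) : nu B q β x ≤ 1 := by
  rw [nu, div_le_one (denom_pos hB hq x)]
  nlinarith [rpow_pos' hB (-(β * x))]

lemma nu_mono (hB : 1 < B) (hq : 0 < q) (hβ : 0 < β) : Monotone (nu B q β) := by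
  intro x y hxy
  unfold nu
  apply one_div_le_one_div_of_le (denom_pos hB hq y)
  have h : B ^ (-(β * y)) ≤ B ^ (-(β * x)) :=
    (Real.rpow_le_rpow_left_iff hB).mpr (by nlinarith)
  nlinarith

lemma one_sub_nu_le (hB : 1 < B) (hq : 0 < q) (x : ℝ) :
    1 - nu B q β x ≤ q * B ^ (-(β * x)) := by
  set t := q * B ^ (-(β * x)) with ht
  have ht0 : 0 < t := by
    have := rpow_pos' hB (-(β * x)); positivity
  have h1 : nu B q β x = 1 / (1 + t) := rfl
  have h2 : 1 - 1 / (1 + t) = t / (1 + t) := by field_simp; ring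
  rw [h1, h2]
  exact div_le_self ht0.le (by linarith)

lemma nu_le' (hB : 1 < B) (hq : 0 < q) (x : ℝ) :
    nu B q β x ≤ (1 / q) * B ^ (β * x) := by
  set t := q * B ^ (-(β * x)) with ht
  have htp : 0 < B ^ (-(β * x)) := rpow_pos' hB _
  have ht0 : 0 < t := by positivity
  have h1 : nu B q β x = 1 / (1 + t) := rfl
  have h2 : (1 : ℝ) / (1 + t) ≤ 1 / t := one_div_le_one_div_of_le ht0 (by linarith)
  have h3 : (1 : ℝ) / t = (1 / q) * B ^ (β * x) := by
    rw [ht, Real.rpow_neg (by linarith : (0:ℝ) ≤ B)]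
    field_simp
  rw [h1]; rw [h3] at h2; exact h2

lemma continuous_nu (hB : 1 < B) (hq : 0 < q) : Continuous (nu B q β) := by
  have hB0 : (0 : ℝ) < B := by linarith
  have hrw : nu B q β = fun x => 1 / (1 + q * Real.exp (Real.log B * -(β * x))) := by
    funext x; rw [nu, Real.rpow_def_of_pos hB0]
  rw [hrw]
  refine Continuous.div continuous_const (by fun_prop) fun x => ?_
  have := denom_pos hB hq (β := β) x
  rw [Real.rpow_def_of_pos hB0] at this
  linarith

lemma G_nonneg (hB : 1 < B) (hq : 0 < q) (hβ : 0 < β) (x : ℝ) : 0 ≤ G B q β x := by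
  have := nu_mono hB hq hβ (show x - 1 ≤ x + 1 by linarith)
  rw [G]; linarith

lemma continuous_G (hB : 1 < B) (hq : 0 < q) : Continuous (G B q β) := by
  have h := continuous_nu (β := β) hB hq
  unfold G
  fun_prop

lemma integrable_G (hB : 1 < B) (hq : 0 < q) (hβ : 0 < β) :
    Integrable (G B q β) := by
  have hB0 : (0 : ℝ) < B := by linarith
  set c := β * Real.log B with hc
  have hc0 : 0 < c := mul_pos hβ (Real.log_pos hB)
  set C := (q + 1 / q) / 2 * B ^ β with hC
  have hbound : ∀ x : ℝ, ‖G B q β x‖ ≤ C * Real.exp (-(c * |x|)) := by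
    intro x
    rw [Real.norm_eq_abs, abs_of_nonneg (G_nonneg hB hq hβ x)]
    have hexp : ∀ y : ℝ, B ^ y = Real.exp (Real.log B * y) := fun y =>
      Real.rpow_def_of_pos hB0 y
    have hBβ : (0:ℝ) < B ^ β := rpow_pos' hB β
    have hex : (0:ℝ) < Real.exp (-(c * |x|)) := Real.exp_pos _
    have hq1 : (0:ℝ) < 1 / q := by positivity
    rcases le_or_gt 0 x with hx | hx
    · have h1 : G B q β x ≤ (1 - nu B q β (x - 1)) / 2 := by
        have := nu_le_one hB hq (β := β) (x + 1); rw [G]; linarith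
      have h2 : 1 - nu B q β (x - 1) ≤ q * B ^ (-(β * (x - 1))) := one_sub_nu_le hB hq _
      have h3 : B ^ (-(β * (x - 1))) = B ^ β * Real.exp (-(c * |x|)) := by
        rw [abs_of_nonneg hx, hexp, hexp, ← Real.exp_add]
        congr 1; rw [hc]; ring
      calc G B q β x ≤ (q * B ^ (-(β * (x - 1)))) / 2 := by linarith
        _ = q / 2 * (B ^ β * Real.exp (-(c * |x|))) := by rw [h3]; ring
        _ ≤ (q + 1 / q) / 2 * (B ^ β * Real.exp (-(c * |x|))) :=
            mul_le_mul_of_nonneg_right (by linarith) (by positivity)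
        _ = C * Real.exp (-(c * |x|)) := by rw [hC]; ring
    · have h1 : G B q β x ≤ nu B q β (x + 1) / 2 := by
        have := nu_pos hB hq (β := β) (x - 1); rw [G]; linarith
      have h2 : nu B q β (x + 1) ≤ (1 / q) * B ^ (β * (x + 1)) := nu_le' hB hq _
      have h3 : B ^ (β * (x + 1)) = B ^ β * Real.exp (-(c * |x|)) := by
        rw [abs_of_neg hx, hexp, hexp, ← Real.exp_add]
        congr 1; rw [hc]; ring
      calc G B q β x ≤ ((1 / q) * B ^ (β * (x + 1))) / 2 := by linarith
        _ = (1 / q) / 2 * (B ^ β * Real.exp (-(c * |x|))) := by rw [h3]; ring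
        _ ≤ (q + 1 / q) / 2 * (B ^ β * Real.exp (-(c * |x|))) :=
            mul_le_mul_of_nonneg_right (by linarith) (by positivity)
        _ = C * Real.exp (-(c * |x|)) := by rw [hC]; ring
  have hmaj : Integrable (fun x : ℝ => C * Real.exp (-(c * |x|))) := by
    apply Integrable.const_mul
    set g : ℝ → ℝ := Set.indicator (Ioi 0) (fun x => Real.exp (-c * x)) with hg
    have hgint : Integrable g :=
      (exp_neg_integrableOn_Ioi 0 hc0).integrable_indicator measurableSet_Ioi
    have hgneg : Integrable (fun x => g (-x)) := by
      have := (integrable_comp_mul_left_iff g (show (-1:ℝ) ≠ 0 by norm_num)).2 hgint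
      simpa using this
    have h0 : ∀ᵐ (x : ℝ), x ≠ 0 := by
      refine ae_iff.mpr ?_
      have he : {x : ℝ | ¬ x ≠ 0} = {0} := by ext x; simp
      rw [he]; exact Real.volume_singleton
    refine (hgint.add hgneg).congr ?_
    filter_upwards [h0] with x hx
    rcases lt_or_gt_of_ne hx with h | h
    · have h1 : g x = 0 := Set.indicator_of_notMem (by simp; linarith) _
      have h2 : g (-x) = Real.exp (-c * (-x)) := Set.indicator_of_mem (by simp; linarith) _
      simp only [Pi.add_apply, h1, h2, zero_add, abs_of_neg h]
      congr 1; ring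
    · have h1 : g x = Real.exp (-c * x) := Set.indicator_of_mem (by simpa using h) _
      have h2 : g (-x) = 0 := Set.indicator_of_notMem (by simp; linarith) _
      simp only [Pi.add_apply, h1, h2, add_zero, abs_of_pos h]
      congr 1; ring
  exact (hmaj.mono' ((continuous_G hB hq).aestronglyMeasurable)
    (Eventually.of_forall hbound))

lemma intervalIntegral_G (hB : 1 < B) (hq : 0 < q) (T R : ℝ) :
    ∫ x in T..R, G B q β x =
      ((∫ x in (R-1)..(R+1), nu B q β x) - ∫ x in (T-1)..(T+1), nu B q β x) / 2 := by
  have hcont := continuous_nu (β := β) hB hq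
  have hint : ∀ a b : ℝ, IntervalIntegrable (nu B q β) volume a b := fun a b =>
    hcont.intervalIntegrable a b
  have i1 : IntervalIntegrable (fun x => nu B q β (x + 1)) volume T R :=
    (hcont.comp (continuous_id.add continuous_const)).intervalIntegrable T R
  have i2 : IntervalIntegrable (fun x => nu B q β (x - 1)) volume T R :=
    (hcont.comp (continuous_id.sub continuous_const)).intervalIntegrable T R
  have h1 : ∫ x in T..R, nu B q β (x + 1) = ∫ x in (T+1)..(R+1), nu B q β x :=
    intervalIntegral.integral_comp_add_right _ _
  have h2 : ∫ x in T..R, nu B q β (x - 1) = ∫ x in (T-1)..(R-1), nu B q β x :=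
    intervalIntegral.integral_comp_sub_right _ _
  have add1 : (∫ x in (T-1)..(R-1), nu B q β x) + (∫ x in (R-1)..(R+1), nu B q β x)
      = ∫ x in (T-1)..(R+1), nu B q β x :=
    intervalIntegral.integral_add_adjacent_intervals (hint _ _) (hint _ _)
  have add2 : (∫ x in (T-1)..(T+1), nu B q β x) + (∫ x in (T+1)..(R+1), nu B q β x)
      = ∫ x in (T-1)..(R+1), nu B q β x :=
    intervalIntegral.integral_add_adjacent_intervals (hint _ _) (hint _ _)
  have hG : ∫ x in T..R, G B q β x
      = ((∫ x in T..R, nu B q β (x + 1)) - ∫ x in T..R, nu B q β (x - 1)) / 2 := by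
    simp only [G]
    rw [intervalIntegral.integral_div, intervalIntegral.integral_sub i1 i2]
  rw [hG, h1, h2]
  linarith

lemma tendsto_nu_atTop (hB : 1 < B) (hq : 0 < q) (hβ : 0 < β) :
    Tendsto (nu B q β) atTop (𝓝 1) := by
  have hB0 : (0 : ℝ) < B := by linarith
  have hc0 : 0 < β * Real.log B := mul_pos hβ (Real.log_pos hB)
  have ht : Tendsto (fun x : ℝ => B ^ (-(β * x))) atTop (𝓝 0) := by
    have h1 : Tendsto (fun x : ℝ => β * Real.log B * x) atTop atTop :=
      Tendsto.const_mul_atTop hc0 tendsto_id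
    have h2 : Tendsto (fun x : ℝ => -(β * Real.log B * x)) atTop atBot :=
      tendsto_neg_atTop_atBot.comp h1
    have h3 := Real.tendsto_exp_atBot.comp h2
    refine h3.congr fun x => ?_
    simp only [Function.comp_apply]
    rw [Real.rpow_def_of_pos hB0]
    congr 1; ring
  have : Tendsto (fun x => 1 / (1 + q * B ^ (-(β * x)))) atTop (𝓝 (1 / (1 + q * 0))) := by
    apply Tendsto.div tendsto_const_nhds
    · exact tendsto_const_nhds.add (ht.const_mul q)
    · norm_num
  have h9 : nu B q β = fun x => 1 / (1 + q * B ^ (-(β * x))) := rfl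
  rw [h9]
  simpa using this

lemma tendsto_nu_atBot (hB : 1 < B) (hq : 0 < q) (hβ : 0 < β) :
    Tendsto (nu B q β) atBot (𝓝 0) := by
  have hB0 : (0 : ℝ) < B := by linarith
  have hc0 : 0 < β * Real.log B := mul_pos hβ (Real.log_pos hB)
  have ht : Tendsto (fun x : ℝ => 1 + q * B ^ (-(β * x))) atBot atTop := by
    have h1 : Tendsto (fun x : ℝ => β * Real.log B * x) atBot atBot :=
      Tendsto.const_mul_atBot hc0 tendsto_id
    have h2 : Tendsto (fun x : ℝ => -(β * Real.log B * x)) atBot atTop :=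
      tendsto_neg_atBot_atTop.comp h1
    have h3 := Real.tendsto_exp_atTop.comp h2
    have h4 : Tendsto (fun x : ℝ => B ^ (-(β * x))) atBot atTop := by
      refine h3.congr fun x => ?_
      simp only [Function.comp_apply]
      rw [Real.rpow_def_of_pos hB0]
      congr 1; ring
    exact tendsto_atTop_add_const_left _ 1 (h4.const_mul_atTop hq)
  have := ht.inv_tendsto_atTop
  refine this.congr fun x => ?_
  simp [nu, one_div]

lemma nu_interval_upper (hB : 1 < B) (hq : 0 < q) (hβ : 0 < β) (a : ℝ) :
    ∫ x in (a-1)..(a+1), nu B q β x ≤ 2 * nu B q β (a+1) := by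
  have hcont := continuous_nu (β := β) hB hq
  have h := intervalIntegral.integral_mono_on (μ := volume) (a := a-1) (b := a+1)
    (by linarith) (hcont.intervalIntegrable _ _) (continuous_const.intervalIntegrable _ _)
    (fun x hx => nu_mono hB hq hβ hx.2)
  rw [intervalIntegral.integral_const, smul_eq_mul] at h
  calc ∫ x in (a-1)..(a+1), nu B q β x ≤ (a+1-(a-1)) * nu B q β (a+1) := h
    _ = 2 * nu B q β (a+1) := by ring_nf

lemma nu_interval_lower (hB : 1 < B) (hq : 0 < q) (hβ : 0 < β) (a : ℝ) :
    2 * nu B q β (a-1) ≤ ∫ x in (a-1)..(a+1), nu B q β x := by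
  have hcont := continuous_nu (β := β) hB hq
  have h := intervalIntegral.integral_mono_on (μ := volume) (a := a-1) (b := a+1)
    (by linarith) (continuous_const.intervalIntegrable _ _) (hcont.intervalIntegrable _ _)
    (fun x hx => nu_mono hB hq hβ hx.1)
  rw [intervalIntegral.integral_const, smul_eq_mul] at h
  calc 2 * nu B q β (a-1) = (a+1-(a-1)) * nu B q β (a-1) := by ring_nf
    _ ≤ _ := h

lemma nu_interval_le_two (hB : 1 < B) (hq : 0 < q) (a : ℝ) :
    ∫ x in (a-1)..(a+1), nu B q β x ≤ 2 := by
  have hcont := continuous_nu (β := β) hB hq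
  have h := intervalIntegral.integral_mono_on (μ := volume) (a := a-1) (b := a+1)
    (by linarith) (hcont.intervalIntegrable _ _) (continuous_const.intervalIntegrable _ _)
    (fun x _ => nu_le_one hB hq x)
  rw [intervalIntegral.integral_const, smul_eq_mul] at h
  calc ∫ x in (a-1)..(a+1), nu B q β x ≤ (a+1-(a-1)) * 1 := h
    _ = 2 := by ring

lemma nu_interval_nonneg (hB : 1 < B) (hq : 0 < q) (a : ℝ) :
    0 ≤ ∫ x in (a-1)..(a+1), nu B q β x :=
  intervalIntegral.integral_nonneg (by linarith) (fun x _ => (nu_pos hB hq x).le)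

set_option maxHeartbeats 1000000 in
lemma integral_G_eq_one (hB : 1 < B) (hq : 0 < q) (hβ : 0 < β) :
    ∫ x, G B q β x = 1 := by
  have hlim := MeasureTheory.intervalIntegral_tendsto_integral (μ := volume)
    (integrable_G hB hq hβ) tendsto_neg_atTop_atBot tendsto_id
  have h2 : Tendsto (fun R : ℝ => ∫ x in (R-1)..(R+1), nu B q β x) atTop (𝓝 2) := by
    have hl : Tendsto (fun R : ℝ => 2 * nu B q β (R-1)) atTop (𝓝 2) := by
      have hc : Tendsto (fun R : ℝ => R - 1) atTop atTop :=
        tendsto_atTop_add_const_right atTop (-1) tendsto_id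
      have := ((tendsto_nu_atTop hB hq hβ).comp hc).const_mul 2
      simpa using this
    exact tendsto_of_tendsto_of_tendsto_of_le_of_le hl tendsto_const_nhds
      (fun R => nu_interval_lower hB hq hβ R) (fun R => nu_interval_le_two hB hq R)
  have h3 : Tendsto (fun R : ℝ => ∫ x in (-R-1)..(-R+1), nu B q β x) atTop (𝓝 0) := by
    have hl : Tendsto (fun R : ℝ => 2 * nu B q β (-R+1)) atTop (𝓝 0) := by
      have hc : Tendsto (fun R : ℝ => -R + 1) atTop atBot :=
        tendsto_atBot_add_const_right atTop 1 tendsto_neg_atTop_atBot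
      have := ((tendsto_nu_atBot hB hq hβ).comp hc).const_mul 2
      simpa using this
    refine tendsto_of_tendsto_of_tendsto_of_le_of_le tendsto_const_nhds hl
      (fun R => nu_interval_nonneg hB hq (-R)) (fun R => nu_interval_upper hB hq hβ (-R))
  have h4 : Tendsto (fun R : ℝ => ∫ x in (-R)..(id R), G B q β x) atTop (𝓝 1) := by
    have := (h2.sub h3).div_const 2
    norm_num at this
    refine this.congr fun R => ?_
    rw [intervalIntegral_G hB hq]
    norm_num
  exact tendsto_nhds_unique hlim h4

lemma tail_G_Ioi (hB : 1 < B) (hq : 0 < q) (hβ : 0 < β) (T : ℝ) :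
    ∫ x in Ioi T, G B q β x ≤ q * B ^ (-(β * (T - 1))) := by
  have hInt : IntegrableOn (G B q β) (Ioi T) := (integrable_G hB hq hβ).integrableOn
  have hlim := intervalIntegral_tendsto_integral_Ioi T hInt tendsto_id
  refine le_of_tendsto hlim ?_
  filter_upwards [eventually_ge_atTop T] with R _
  simp only [id_eq]
  rw [intervalIntegral_G hB hq]
  have hup := nu_interval_le_two (β := β) hB hq R
  have hlow := nu_interval_lower hB hq hβ T
  have hsub := one_sub_nu_le hB hq (β := β) (T-1)
  linarith

lemma tail_G_Iio (hB : 1 < B) (hq : 0 < q) (hβ : 0 < β) (T : ℝ) :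
    ∫ x in Iio (-T), G B q β x ≤ (1/q) * B ^ (-(β * (T - 1))) := by
  have h1 : ∫ x in Iio (-T), G B q β x = ∫ x in Iic (-T), G B q β x :=
    setIntegral_congr_set Iio_ae_eq_Iic
  rw [h1]
  have hInt : IntegrableOn (G B q β) (Iic (-T)) := (integrable_G hB hq hβ).integrableOn
  have hlim := intervalIntegral_tendsto_integral_Iic (-T) hInt tendsto_neg_atTop_atBot
  refine le_of_tendsto hlim ?_
  filter_upwards [eventually_ge_atTop T] with R _
  rw [intervalIntegral_G hB hq]
  have h0 := nu_interval_nonneg (β := β) hB hq (-R)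
  have hup := nu_interval_upper hB hq hβ (-T)
  have h2 : nu B q β (-T+1) ≤ (1/q) * B ^ (β * (-T+1)) := nu_le' hB hq _
  have h3 : β * (-T+1) = -(β * (T-1)) := by ring
  rw [h3] at h2
  linarith

lemma integrable_Psi (hB : 1 < B) (hq : 0 < q) (hβ : 0 < β) :
    Integrable (Psi B q β) := by
  have hq' : 0 < 1/q := by positivity
  have h1 := integrable_G hB hq hβ
  have h2 := integrable_G hB hq' hβ
  exact ((h1.add h2).div_const 2).congr (Eventually.of_forall fun x => rfl)

lemma Psi_nonneg (hB : 1 < B) (hq : 0 < q) (hβ : 0 < β) (x : ℝ) : 0 ≤ Psi B q β x := by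
  have hq' : 0 < 1/q := by positivity
  have := G_nonneg hB hq hβ x
  have := G_nonneg hB hq' hβ x
  rw [Psi]; linarith

lemma integral_Psi_eq_one (hB : 1 < B) (hq : 0 < q) (hβ : 0 < β) :
    ∫ x, Psi B q β x = 1 := by
  have hq' : 0 < 1/q := by positivity
  have h1 := integrable_G hB hq hβ
  have h2 := integrable_G hB hq' hβ
  have : ∫ x, Psi B q β x = (∫ x, (G B q β x + G B (1/q) β x)) / 2 := by
    rw [← integral_div]
    rfl
  rw [this, integral_add h1 h2, integral_G_eq_one hB hq hβ, integral_G_eq_one hB hq' hβ]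
  norm_num

lemma tail_Psi (hB : 1 < B) (hq : 0 < q) (hβ : 0 < β) {T : ℝ} (hT : 0 < T) :
    ∫ x in {u : ℝ | T < |u|}, Psi B q β x ≤ (q + 1/q) * B ^ (-(β * (T - 1))) := by
  have hq' : 0 < 1/q := by positivity
  have hseteq : {u : ℝ | T < |u|} = Iio (-T) ∪ Ioi T := by
    ext u
    simp only [mem_setOf_eq, lt_abs, mem_union, mem_Iio, mem_Ioi]
    rw [lt_neg, or_comm]
  have hPsiInt := integrable_Psi hB hq hβ
  have hdisj : Disjoint (Iio (-T)) (Ioi T) :=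
    (Iic_disjoint_Ioi (by linarith : -T ≤ T)).mono Iio_subset_Iic_self le_rfl
  rw [hseteq, setIntegral_union hdisj measurableSet_Ioi hPsiInt.integrableOn
    hPsiInt.integrableOn]
  have hsplit : ∀ s : Set ℝ, MeasurableSet s →
      ∫ x in s, Psi B q β x
        = ((∫ x in s, G B q β x) + ∫ x in s, G B (1/q) β x) / 2 := by
    intro s _
    rw [← integral_add ((integrable_G hB hq hβ).integrableOn)
      ((integrable_G hB hq' hβ).integrableOn), ← integral_div]
    rfl
  have e1 := hsplit (Ioi T) measurableSet_Ioi
  have e2 := hsplit (Iio (-T)) measurableSet_Iio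
  have t1 := tail_G_Ioi hB hq hβ T
  have t2 := tail_G_Ioi hB hq' hβ T
  have t3 := tail_G_Iio hB hq hβ T
  have t4 := tail_G_Iio hB hq' hβ T
  rw [one_div_one_div] at t4
  rw [e1, e2]
  linarith

end Helpers
open Topology Set in
/-- quantitative approximation by `A_n` and uniform convergence. -/
theorem opA_approx (B q β α : ℝ) (hB : 1 < B) (hq : 0 < q) (hβ : 0 < β)
    (hα0 : 0 < α) (hα1 : α < 1) (f : ℝ → ℝ) (hf : Continuous f)
    (hfb : ∃ M : ℝ, ∀ x : ℝ, |f x| ≤ M) :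
    (∀ n : ℕ, 2 < (n : ℝ) ^ (1 - α) →
      (∀ x : ℝ, |opA B q β n f x - f x| ≤
          modCont f (1 / (n : ℝ) ^ α) +
            2 * (q + 1 / q) * supNorm f / B ^ (β * ((n : ℝ) ^ (1 - α) - 1))) ∧
      supNorm (fun x => opA B q β n f x - f x) ≤
        modCont f (1 / (n : ℝ) ^ α) +
          2 * (q + 1 / q) * supNorm f / B ^ (β * ((n : ℝ) ^ (1 - α) - 1))) ∧
    (UniformContinuous f →
      TendstoUniformly (fun (n : ℕ) (x : ℝ) => opA B q β n f x) f atTop) := by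
  have hB0 : (0 : ℝ) < B := by linarith
  obtain ⟨M0, hM0⟩ := hfb
  have hbdd : BddAbove (Set.range fun x : ℝ => |f x|) := by
    refine ⟨M0, ?_⟩
    rintro _ ⟨x, rfl⟩
    exact hM0 x
  have hfM : ∀ x, |f x| ≤ supNorm f := fun x => le_ciSup hbdd x
  have hM_nonneg : 0 ≤ supNorm f := le_trans (abs_nonneg _) (hfM 0)
  have hΨint := integrable_Psi hB hq hβ
  have hΨ0 := Psi_nonneg hB hq hβ
  have hΨ1 := integral_Psi_eq_one hB hq hβ
  -- key pointwise estimate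
  have key : ∀ n : ℕ, 2 < (n : ℝ) ^ (1 - α) → ∀ x : ℝ,
      |opA B q β n f x - f x| ≤
        modCont f (1 / (n : ℝ) ^ α) +
          2 * (q + 1 / q) * supNorm f / B ^ (β * ((n : ℝ) ^ (1 - α) - 1)) := by
    intro n hn x
    have hNpos : (0 : ℝ) < (n : ℝ) := by
      rcases Nat.eq_zero_or_pos n with h | h
      · exfalso
        rw [h] at hn
        simp only [Nat.cast_zero] at hn
        rw [Real.zero_rpow (by linarith : 1 - α ≠ 0)] at hn
        linarith
      · exact_mod_cast h
    set N : ℝ := (n : ℝ) with hN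
    set T : ℝ := N ^ (1 - α) with hTdef
    have hT2 : 2 < T := hn
    have hT0 : 0 < T := by linarith
    set θ : ℝ := 1 / N ^ α with hθ
    have hNα : 0 < N ^ α := Real.rpow_pos_of_pos hNpos α
    have hθ0 : 0 < θ := by positivity
    -- modCont facts
    have hSbdd : BddAbove {d : ℝ | ∃ a b : ℝ, |a - b| ≤ θ ∧ d = |f a - f b|} := by
      refine ⟨2 * supNorm f, ?_⟩
      rintro d ⟨a, b, _, rfl⟩
      have := abs_sub_abs_le_abs_sub (f a) (f b)
      have h2 := abs_sub (f a) (f b)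
      calc |f a - f b| ≤ |f a| + |f b| := abs_sub _ _
        _ ≤ 2 * supNorm f := by linarith [hfM a, hfM b]
    have hmod : ∀ a b : ℝ, |a - b| ≤ θ → |f a - f b| ≤ modCont f θ := fun a b h =>
      le_csSup hSbdd ⟨a, b, h, rfl⟩
    have hmod0 : 0 ≤ modCont f θ := by
      have := hmod 0 0 (by simp [hθ0.le])
      simpa using this
    -- change of variables
    have hchg : opA B q β n f x = ∫ u : ℝ, f (x - u / N) * Psi B q β u := by
      rw [opA]
      have hcv := MeasureTheory.integral_sub_left_eq_self
        (fun v : ℝ => f (v / N) * Psi B q β (N * x - v)) (volume : Measure ℝ) (N * x)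
      rw [← hcv]
      congr 1
      funext u
      rw [show (N * x - u) / N = x - u / N by field_simp,
        show N * x - (N * x - u) = u by ring]
    have hmeas1 : AEStronglyMeasurable (fun u : ℝ => f (x - u / N)) volume :=
      (hf.comp (by fun_prop)).aestronglyMeasurable
    have hg_int : Integrable (fun u : ℝ => f (x - u / N) * Psi B q β u) :=
      hΨint.bdd_mul (c := supNorm f) hmeas1 (Eventually.of_forall fun u => by
        rw [Real.norm_eq_abs]; exact hfM _)
    have hfx_int : Integrable (fun u : ℝ => f x * Psi B q β u) := hΨint.const_mul _
    have hdiff_int : Integrable (fun u : ℝ => (f (x - u / N) - f x) * Psi B q β u) := by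
      have he : (fun u : ℝ => (f (x - u / N) - f x) * Psi B q β u)
          = fun u => f (x - u / N) * Psi B q β u - f x * Psi B q β u := by
        funext u; ring
      rw [he]; exact hg_int.sub hfx_int
    have hdiff : opA B q β n f x - f x = ∫ u : ℝ, (f (x - u / N) - f x) * Psi B q β u := by
      have he : (fun u : ℝ => (f (x - u / N) - f x) * Psi B q β u)
          = fun u => f (x - u / N) * Psi B q β u - f x * Psi B q β u := by
        funext u; ring
      rw [hchg, he, integral_sub hg_int hfx_int, integral_const_mul, hΨ1, mul_one]
    -- tail set
    set Sset : Set ℝ := {u : ℝ | T < |u|} with hSset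
    have hSmeas : MeasurableSet Sset := (isOpen_lt continuous_const continuous_abs).measurableSet
    have hmaj_int : Integrable (fun u : ℝ =>
        modCont f θ * Psi B q β u + (2 * supNorm f) * Set.indicator Sset (Psi B q β) u) :=
      (hΨint.const_mul _).add ((hΨint.indicator hSmeas).const_mul _)
    have hptwise : ∀ u : ℝ, |f (x - u / N) - f x| * |Psi B q β u| ≤
        modCont f θ * Psi B q β u + (2 * supNorm f) * Set.indicator Sset (Psi B q β) u := by
      intro u
      rw [abs_of_nonneg (hΨ0 u)]
      by_cases hu : T < |u|
      · have h2M : |f (x - u / N) - f x| ≤ 2 * supNorm f := by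
          calc |f (x - u / N) - f x| ≤ |f (x - u / N)| + |f x| := abs_sub _ _
            _ ≤ 2 * supNorm f := by linarith [hfM (x - u / N), hfM x]
        have hind : Set.indicator Sset (Psi B q β) u = Psi B q β u :=
          Set.indicator_of_mem (show u ∈ Sset from hu) _
        rw [hind]
        nlinarith [hΨ0 u, mul_le_mul_of_nonneg_right h2M (hΨ0 u), mul_nonneg hmod0 (hΨ0 u)]
      · push_neg at hu
        have hdist : |(x - u / N) - x| ≤ θ := by
          rw [show (x - u / N) - x = -(u / N) by ring, abs_neg, abs_div,
            abs_of_pos hNpos, hθ, div_le_div_iff₀ hNpos hNα]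
          calc |u| * N ^ α ≤ T * N ^ α := mul_le_mul_of_nonneg_right hu hNα.le
            _ = N ^ ((1 - α) + α) := by rw [hTdef, Real.rpow_add hNpos]
            _ = 1 * N := by rw [show (1 - α) + α = 1 by ring, Real.rpow_one, one_mul]
        have hind : Set.indicator Sset (Psi B q β) u = 0 :=
          Set.indicator_of_notMem (show u ∉ Sset from hu.not_gt) _
        rw [hind, mul_zero, add_zero]
        exact mul_le_mul_of_nonneg_right (hmod _ _ hdist) (hΨ0 u)
    have habs : |opA B q β n f x - f x| ≤
        modCont f θ * 1 + (2 * supNorm f) * ∫ u in Sset, Psi B q β u := by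
      rw [hdiff]
      have habs_int : Integrable (fun u : ℝ => |f (x - u / N) - f x| * |Psi B q β u|) := by
        refine hdiff_int.abs.congr (Eventually.of_forall fun u => ?_)
        exact abs_mul _ _
      calc |∫ u : ℝ, (f (x - u / N) - f x) * Psi B q β u|
          ≤ ∫ u : ℝ, |f (x - u / N) - f x| * |Psi B q β u| := by
            simpa [Real.norm_eq_abs] using norm_integral_le_integral_norm (μ := volume)
              (fun u : ℝ => (f (x - u / N) - f x) * Psi B q β u)
        _ ≤ ∫ u : ℝ, (modCont f θ * Psi B q β u
              + (2 * supNorm f) * Set.indicator Sset (Psi B q β) u) :=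
            integral_mono habs_int hmaj_int hptwise
        _ = modCont f θ * 1 + (2 * supNorm f) * ∫ u in Sset, Psi B q β u := by
            rw [integral_add (hΨint.const_mul _) ((hΨint.indicator hSmeas).const_mul _),
              integral_const_mul, integral_const_mul, hΨ1, integral_indicator hSmeas]
    have htail := tail_Psi hB hq hβ hT0
    have hfinal : modCont f θ * 1 + (2 * supNorm f) * ∫ u in Sset, Psi B q β u ≤
        modCont f θ + 2 * (q + 1 / q) * supNorm f / B ^ (β * (T - 1)) := by
      have h1 : (2 * supNorm f) * ∫ u in Sset, Psi B q β u ≤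
          (2 * supNorm f) * ((q + 1 / q) * B ^ (-(β * (T - 1)))) :=
        mul_le_mul_of_nonneg_left htail (by linarith)
      have h2 : (2 * supNorm f) * ((q + 1 / q) * B ^ (-(β * (T - 1))))
          = 2 * (q + 1 / q) * supNorm f / B ^ (β * (T - 1)) := by
        rw [Real.rpow_neg hB0.le, div_eq_mul_inv]
        ring
      rw [h2] at h1
      linarith
    exact le_trans habs hfinal
  refine ⟨fun n hn => ⟨key n hn, ?_⟩, ?_⟩
  · exact ciSup_le fun x => key n hn x
  · -- uniform convergence
    intro hUC
    rw [Metric.tendstoUniformly_iff]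
    intro ε hε
    obtain ⟨δ, hδ0, hδ⟩ := Metric.uniformContinuous_iff.mp hUC (ε / 2) (by linarith)
    have hNt : Tendsto (fun n : ℕ => (n : ℝ) ^ (1 - α)) atTop atTop :=
      (tendsto_rpow_atTop (by linarith)).comp tendsto_natCast_atTop_atTop
    have hE1 : ∀ᶠ n : ℕ in atTop, 2 < (n : ℝ) ^ (1 - α) := hNt.eventually_gt_atTop 2
    have hmodt : ∀ᶠ n : ℕ in atTop, modCont f (1 / (n : ℝ) ^ α) ≤ ε / 2 := by
      have h2 : Tendsto (fun n : ℕ => 1 / (n : ℝ) ^ α) atTop (𝓝 0) := by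
        have := ((tendsto_rpow_atTop hα0).comp
          (tendsto_natCast_atTop_atTop (R := ℝ))).inv_tendsto_atTop
        refine this.congr fun n => ?_
        simp [one_div]
      filter_upwards [h2.eventually (gt_mem_nhds hδ0)] with n h1
      apply csSup_le
      · exact ⟨|f 0 - f 0|, 0, 0, by simp; positivity, rfl⟩
      · rintro d ⟨a, b, hab, rfl⟩
        have hd : dist a b < δ := by
          rw [Real.dist_eq]
          exact lt_of_le_of_lt hab h1
        have := hδ hd
        rw [Real.dist_eq] at this
        linarith
    have htailt : Tendsto (fun n : ℕ =>
        2 * (q + 1 / q) * supNorm f / B ^ (β * ((n : ℝ) ^ (1 - α) - 1))) atTop (𝓝 0) := by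
      apply Tendsto.div_atTop tendsto_const_nhds
      have hBy : Tendsto (fun y : ℝ => B ^ y) atTop atTop := by
        have h1 : Tendsto (fun y : ℝ => Real.log B * y) atTop atTop :=
          Tendsto.const_mul_atTop (Real.log_pos hB) tendsto_id
        refine (Real.tendsto_exp_atTop.comp h1).congr fun y => ?_
        simp only [Function.comp_apply]
        rw [Real.rpow_def_of_pos hB0]
      refine hBy.comp ?_
      apply Tendsto.const_mul_atTop hβ
      have := tendsto_atTop_add_const_right atTop (-1 : ℝ) hNt
      refine this.congr fun n => ?_
      ring
    have hE3 : ∀ᶠ n : ℕ in atTop,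
        2 * (q + 1 / q) * supNorm f / B ^ (β * ((n : ℝ) ^ (1 - α) - 1)) < ε / 2 :=
      htailt.eventually (gt_mem_nhds (by linarith))
    filter_upwards [hE1, hmodt, hE3] with n h1 h2 h3
    intro x
    rw [Real.dist_eq, abs_sub_comm]
    calc |opA B q β n f x - f x| ≤ modCont f (1 / (n : ℝ) ^ α) +
        2 * (q + 1 / q) * supNorm f / B ^ (β * ((n : ℝ) ^ (1 - α) - 1)) := key n h1 x
      _ < ε := by linarith
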